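/- Let H be an n×m real matrix, x ∈ R^m, e ∈ R^n supported on a set K with |K| ≤ k, v ∈ R^n with ‖v‖₂ ≤ ε, and y = Hx + e + v. Suppose: (i) every w in the column range of H satisfies C‖w_K'‖₁ ≤ ‖w_{K̄'}‖₁ for every set K' with |K'| ≤ k, where C > 1; (ii) every w in the range of H satisfies α√n‖w‖₂ ≤ ‖w‖₁ with α ∈ (0,1]; (iii) σ_min > 0 is a lower bound on ‖Hu‖₂/‖u‖₂ for all nonzero u ∈ R^m. Then any pair (x̂, ẑ) with ‖ẑ‖₂ ≤ ε minimizing ‖y − Hx' − z'‖₁ over all (x', z') with ‖z'‖₂ ≤ ε satisfies ‖x − x̂‖₂ ≤ 2(C+1)ε / (σ_min·α·(C−1)). -/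

import Mathlib

open Finset
noncomputable section
open scoped Classical

def l1 {n : ℕ} (w : Fin n → ℝ) : ℝ := ∑ i, |w i|
def l2 {n : ℕ} (w : Fin n → ℝ) : ℝ := Real.sqrt (∑ i, (w i)^2)
def restr {n : ℕ} (w : Fin n → ℝ) (K : Finset (Fin n)) : Fin n → ℝ := fun i => if i ∈ K then w i else 0
def l0 {n : ℕ} (w : Fin n → ℝ) : ℕ := (Finset.univ.filter (fun i => w i ≠ 0)).card

/-!
Put `d = x - x̂`, `w = H d` and `r = v - ẑ`, so that `y - H x̂ - ẑ = w + e + r` while `(x, v)` leaves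
the residual `e`. Optimality gives `‖w + e‖₁ ≤ ‖e‖₁ + ‖r‖₁`, and since `e` lives on `K` the left side
is at least `‖e‖₁ - ‖w_K‖₁ + ‖w_K̄‖₁`; hence `‖w_K̄‖₁ - ‖w_K‖₁ ≤ ‖r‖₁ ≤ 2√n ε`. Together with
`C ‖w_K‖₁ ≤ ‖w_K̄‖₁` this bounds `‖w‖₁` by `(C+1)/(C-1) · 2√n ε`; the comparison of norms on the range
of `H` turns it into `α ‖w‖₂ ≤ (C+1)/(C-1) · 2ε`, and `σ_min ‖d‖₂ ≤ ‖w‖₂` finishes the proof.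
-/

section

variable {n : ℕ}

lemma l1_nonneg (w : Fin n → ℝ) : 0 ≤ l1 w :=
  Finset.sum_nonneg fun _ _ => abs_nonneg _

lemma l2_nonneg (w : Fin n → ℝ) : 0 ≤ l2 w := Real.sqrt_nonneg _

lemma l2_eq_norm_toLp (w : Fin n → ℝ) : l2 w = ‖WithLp.toLp 2 w‖ := by
  simp [l2, EuclideanSpace.norm_eq, Real.norm_eq_abs, sq_abs]

lemma l2_sub_le (a b : Fin n → ℝ) : l2 (a - b) ≤ l2 a + l2 b := by
  simpa only [l2_eq_norm_toLp, WithLp.toLp_sub] using norm_sub_le _ _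

lemma l1_sub_le (a b : Fin n → ℝ) : l1 (a - b) ≤ l1 a + l1 b := by
  simp only [l1, ← Finset.sum_add_distrib]
  exact Finset.sum_le_sum fun i _ => abs_sub (a i) (b i)

lemma l1_le_sqrt_mul_l2 (w : Fin n → ℝ) : l1 w ≤ Real.sqrt n * l2 w := by
  have hsq : l1 w ^ 2 ≤ n * ∑ i, w i ^ 2 := by
    simpa [l1, sq_abs] using sq_sum_le_card_mul_sum_sq (s := univ) (f := fun i => |w i|)
  rw [l2, ← Real.sqrt_mul (Nat.cast_nonneg n), ← Real.sqrt_sq (l1_nonneg w)]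
  exact Real.sqrt_le_sqrt hsq

lemma mul_l2_le_of_l1_le {α B : ℝ} (w : Fin n → ℝ) (hB : 0 ≤ B)
    (hAE : α * Real.sqrt n * l2 w ≤ l1 w) (hw : l1 w ≤ Real.sqrt n * B) : α * l2 w ≤ B := by
  rcases Nat.eq_zero_or_pos n with rfl | hn
  · simpa [l2] using hB
  · have hsqrt : 0 < Real.sqrt n := Real.sqrt_pos.mpr (Nat.cast_pos.mpr hn)
    refine le_of_mul_le_mul_left ?_ hsqrt
    linarith

lemma l1_restr (w : Fin n → ℝ) (K : Finset (Fin n)) : l1 (restr w K) = ∑ i ∈ K, |w i| := by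
  simp only [l1, restr, apply_ite abs, abs_zero, Finset.sum_ite_mem, Finset.univ_inter]

lemma l1_eq_l1_restr_add_l1_restr_compl (w : Fin n → ℝ) (K : Finset (Fin n)) :
    l1 w = l1 (restr w K) + l1 (restr w Kᶜ) := by
  rw [l1_restr, l1_restr, Finset.sum_add_sum_compl, l1]

lemma l1_sub_l1_restr_add_l1_restr_compl_le {w e : Fin n → ℝ} {K : Finset (Fin n)}
    (heK : ∀ i, i ∉ K → e i = 0) :
    l1 e - l1 (restr w K) + l1 (restr w Kᶜ) ≤ l1 (w + e) := by
  have he : l1 e = l1 (restr e K) := by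
    rw [l1_eq_l1_restr_add_l1_restr_compl e K, l1_restr e Kᶜ,
      Finset.sum_eq_zero fun i hi => by rw [heK i (Finset.mem_compl.mp hi), abs_zero], add_zero]
  have hK : l1 (restr e K) - l1 (restr w K) ≤ l1 (restr (w + e) K) := by
    simp only [l1_restr, ← Finset.sum_sub_distrib, Pi.add_apply]
    exact Finset.sum_le_sum fun i _ => by
      simpa [add_comm] using abs_sub_abs_le_abs_sub (e i) (-w i)
  have hKc : l1 (restr w Kᶜ) = l1 (restr (w + e) Kᶜ) := by
    simp only [l1_restr, Pi.add_apply]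
    exact Finset.sum_congr rfl fun i hi => by rw [heK i (Finset.mem_compl.mp hi), add_zero]
  rw [he, hKc, l1_eq_l1_restr_add_l1_restr_compl (w + e) K]
  linarith

lemma l1_le_of_mul_l1_restr_le {C R : ℝ} {w : Fin n → ℝ} {K : Finset (Fin n)} (hC : 1 < C)
    (hbal : C * l1 (restr w K) ≤ l1 (restr w Kᶜ))
    (hR : l1 (restr w Kᶜ) - l1 (restr w K) ≤ R) :
    l1 w ≤ (C + 1) / (C - 1) * R := by
  rw [div_mul_eq_mul_div, le_div_iff₀ (by linarith), l1_eq_l1_restr_add_l1_restr_compl w K]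
  linarith [mul_le_mul_of_nonneg_left hR (by linarith : (0 : ℝ) ≤ C + 1)]

end

theorem stmt3_general {n m : ℕ} (H : Matrix (Fin n) (Fin m) ℝ)
    (x : Fin m → ℝ) (e v y : Fin n → ℝ) (K : Finset (Fin n)) (k : ℕ)
    (C α σmin ε : ℝ)
    (heK : ∀ i, i ∉ K → e i = 0) (hKk : K.card ≤ k)
    (hv : l2 v ≤ ε)
    (hy : y = H.mulVec x + e + v)
    (hC : 1 < C)
    (hbal : ∀ (u : Fin m → ℝ) (K' : Finset (Fin n)), K'.card ≤ k →
      C * l1 (restr (H.mulVec u) K') ≤ l1 (restr (H.mulVec u) K'ᶜ))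
    (hα0 : 0 < α)
    (hAE : ∀ u : Fin m → ℝ, α * Real.sqrt n * l2 (H.mulVec u) ≤ l1 (H.mulVec u))
    (hσ : 0 < σmin)
    (hσmin : ∀ u : Fin m → ℝ, σmin * l2 u ≤ l2 (H.mulVec u))
    (xh : Fin m → ℝ) (zh : Fin n → ℝ)
    (hzh : l2 zh ≤ ε)
    (hopt : ∀ (x' : Fin m → ℝ) (z' : Fin n → ℝ), l2 z' ≤ ε →
      l1 (y - H.mulVec xh - zh) ≤ l1 (y - H.mulVec x' - z')) :
    l2 (x - xh) ≤ 2 * (C + 1) * ε / (σmin * α * (C - 1)) := by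
  set w := H.mulVec (x - xh)
  have hε : 0 ≤ ε := (l2_nonneg v).trans hv
  have hresidual : l1 (w + e + (v - zh)) ≤ l1 e := by
    have hxh : y - H.mulVec xh - zh = w + e + (v - zh) := by
      rw [hy, show w = H.mulVec x - H.mulVec xh from Matrix.mulVec_sub H x xh]; abel
    have hx : y - H.mulVec x - v = e := by rw [hy]; abel
    simpa only [hxh, hx] using hopt x v hv
  have hr : l1 (v - zh) ≤ Real.sqrt n * (2 * ε) :=
    (l1_le_sqrt_mul_l2 _).trans <| mul_le_mul_of_nonneg_left
      (by linarith [l2_sub_le v zh]) (Real.sqrt_nonneg _)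
  have hcone : l1 (restr w Kᶜ) - l1 (restr w K) ≤ Real.sqrt n * (2 * ε) := by
    have := l1_sub_le (w + e + (v - zh)) (v - zh)
    rw [add_sub_cancel_right] at this
    linarith [l1_sub_l1_restr_add_l1_restr_compl_le (w := w) heK]
  have hCpos : 0 < C - 1 := sub_pos.mpr hC
  have hB : 0 ≤ (C + 1) / (C - 1) * (2 * ε) :=
    mul_nonneg (div_nonneg (by linarith) hCpos.le) (by linarith)
  have hw : α * l2 w ≤ (C + 1) / (C - 1) * (2 * ε) :=
    mul_l2_le_of_l1_le w hB (hAE _) <|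
      (l1_le_of_mul_l1_restr_le hC (hbal _ K hKk) hcone).trans_eq (by ring)
  rw [div_mul_eq_mul_div, le_div_iff₀ hCpos] at hw
  rw [le_div_iff₀ (by positivity)]
  calc l2 (x - xh) * (σmin * α * (C - 1)) = α * (σmin * l2 (x - xh)) * (C - 1) := by ring
    _ ≤ α * l2 w * (C - 1) := by gcongr; exact hσmin _
    _ ≤ (C + 1) * (2 * ε) := hw
    _ = 2 * (C + 1) * ε := by ring

theorem stmt3 {n m : ℕ} (H : Matrix (Fin n) (Fin m) ℝ)
    (x : Fin m → ℝ) (e v y : Fin n → ℝ) (K : Finset (Fin n)) (k : ℕ)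
    (C α σmin ε : ℝ)
    (heK : ∀ i, i ∉ K → e i = 0) (hKk : K.card ≤ k)
    (hv : l2 v ≤ ε)
    (hy : y = H.mulVec x + e + v)
    (hC : 1 < C)
    (hbal : ∀ (u : Fin m → ℝ) (K' : Finset (Fin n)), K'.card ≤ k →
      C * l1 (restr (H.mulVec u) K') ≤ l1 (restr (H.mulVec u) K'ᶜ))
    (hα0 : 0 < α) (hα1 : α ≤ 1)
    (hAE : ∀ u : Fin m → ℝ, α * Real.sqrt n * l2 (H.mulVec u) ≤ l1 (H.mulVec u))
    (hσ : 0 < σmin)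
    (hσmin : ∀ u : Fin m → ℝ, σmin * l2 u ≤ l2 (H.mulVec u))
    (xh : Fin m → ℝ) (zh : Fin n → ℝ)
    (hzh : l2 zh ≤ ε)
    (hopt : ∀ (x' : Fin m → ℝ) (z' : Fin n → ℝ), l2 z' ≤ ε →
      l1 (y - H.mulVec xh - zh) ≤ l1 (y - H.mulVec x' - z')) :
    l2 (x - xh) ≤ 2 * (C + 1) * ε / (σmin * α * (C - 1)) :=
  stmt3_general H x e v y K k C α σmin ε heK hKk hv hy hC hbal hα0 hAE hσ hσmin xh zh hzh hopt
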